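/- arXiv:1405.7807 — 7 statements merged into one kernel-verified Lean document; each statement's English description precedes it below -/
import Mathlib

section
/- Let G be a finite group with conjugacy classes C_1, ..., C_h, and choose representatives g_i ∈ C_i for each i. Then the set {g_1, ..., g_h} generates G. -/
/-- Let `G` be a finite group with conjugacy classes `C_1, ..., C_h`, and choose
representatives `g_i ∈ C_i` for each `i`. Then the set `{g_1, ..., g_h}` generates `G`. -/
theorem stmt_0 (G : Type*) [Group G] [Finite G]
    (g : ConjClasses G → G) (hg : ∀ c : ConjClasses G, ConjClasses.mk (g c) = c) :
    Subgroup.closure (Set.range g) = ⊤ := by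
  classical
  have _ : Fintype G := Fintype.ofFinite G
  set H := Subgroup.closure (Set.range g) with hH
  -- every element of G has a fixed point in G ⧸ H
  have key : ∀ a : G, ∃ q : G ⧸ H, a • q = q := by
    intro a
    have hc : IsConj (g (ConjClasses.mk a)) a := by
      rw [← ConjClasses.mk_eq_mk_iff_isConj, hg]
    obtain ⟨x, hx⟩ := isConj_iff.mp hc
    refine ⟨QuotientGroup.mk x, ?_⟩
    have hmem : x⁻¹ * a * x ∈ H := by
      have hxa : x⁻¹ * a * x = g (ConjClasses.mk a) := by
        conv_lhs => rw [← hx]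
        group
      rw [hxa]
      exact Subgroup.subset_closure ⟨_, rfl⟩
    show ((a * x : G) : G ⧸ H) = (x : G ⧸ H)
    rw [QuotientGroup.eq]
    have := H.inv_mem hmem
    simpa [mul_assoc] using this
  -- Burnside's lemma
  have hburn := MulAction.sum_card_fixedBy_eq_card_orbits_mul_card_group G (G ⧸ H)
  have horb : Fintype.card (MulAction.orbitRel.Quotient G (G ⧸ H)) = 1 := by
    have : Subsingleton (MulAction.orbitRel.Quotient G (G ⧸ H)) :=
      (MulAction.pretransitive_iff_subsingleton_quotient G (G ⧸ H)).mp inferInstance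
    have : Nonempty (MulAction.orbitRel.Quotient G (G ⧸ H)) := inferInstance
    exact Fintype.card_eq_one_iff_nonempty_unique.mpr
      ⟨⟨⟨Classical.arbitrary _⟩, fun a => Subsingleton.elim _ _⟩⟩
  rw [horb, one_mul] at hburn
  -- card of fixedBy 1 is index
  have hone : Fintype.card (MulAction.fixedBy (G ⧸ H) (1 : G)) = Fintype.card (G ⧸ H) := by
    exact Fintype.card_congr (Equiv.subtypeUnivEquiv (fun q => one_smul G q))
  have hpos : ∀ a : G, 1 ≤ Fintype.card (MulAction.fixedBy (G ⧸ H) a) := by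
    intro a
    obtain ⟨q, hq⟩ := key a
    exact Fintype.card_pos_iff.mpr ⟨⟨q, hq⟩⟩
  -- split the sum
  have hsplit : Fintype.card (G ⧸ H) + (Fintype.card G - 1) ≤ Fintype.card G := by
    calc Fintype.card (G ⧸ H) + (Fintype.card G - 1)
        = Fintype.card (MulAction.fixedBy (G ⧸ H) (1 : G)) + (Fintype.card G - 1) := by rw [hone]
      _ ≤ Fintype.card (MulAction.fixedBy (G ⧸ H) (1 : G))
            + ∑ a ∈ Finset.univ.erase (1 : G), Fintype.card (MulAction.fixedBy (G ⧸ H) a) := by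
          gcongr
          calc Fintype.card G - 1 = (Finset.univ.erase (1 : G)).card := by
                rw [Finset.card_erase_of_mem (Finset.mem_univ _), Finset.card_univ]
            _ ≤ ∑ a ∈ Finset.univ.erase (1 : G), Fintype.card (MulAction.fixedBy (G ⧸ H) a) :=
              Finset.card_nsmul_le_sum _ _ 1 (fun a _ => hpos a) |>.trans_eq' (by simp)
      _ = ∑ a : G, Fintype.card (MulAction.fixedBy (G ⧸ H) a) :=
          Finset.add_sum_erase _ (fun a : G => Fintype.card (MulAction.fixedBy (G ⧸ H) a))
            (Finset.mem_univ 1)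
      _ = Fintype.card G := hburn
  have hGpos : 1 ≤ Fintype.card G := Fintype.card_pos
  have hQpos : 1 ≤ Fintype.card (G ⧸ H) := Fintype.card_pos
  have hcard : Fintype.card (G ⧸ H) = 1 := by omega
  have hidx : H.index = 1 := by
    rw [Subgroup.index, Nat.card_eq_fintype_card, hcard]
  exact Subgroup.index_eq_one.mp hidx
end

section
/- If a subset S of a finite group G meets every conjugacy class of G, then the subgroup generated by S is all of G. -/
/-! The conjugate `g H g⁻¹` depends only on the coset `g H`, so a subgroup `H` of index `n` has
at most `n` conjugates. Each has `|H|` elements and all of them contain `1`, so their union has at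
most `n (|H| - 1) + 1` elements, which is less than `n |H| = |G|` unless `n = 1`. The subgroup
generated by a set meeting every conjugacy class has conjugates covering `G`, hence is `G`. -/

open scoped Pointwise

namespace Subgroup

variable {G : Type*} [Group G] (H : Subgroup G)

theorem conj_out_mk_smul (g : G) :
    MulAut.conj (QuotientGroup.mk g : G ⧸ H).out • H = MulAut.conj g • H := by
  obtain ⟨h, hh⟩ := QuotientGroup.mk_out_eq_mul H g
  rw [hh, map_mul, mul_smul, conj_smul_eq_self_of_mem h.2]

theorem ncard_iUnion_conj_smul_le [Finite G] :
    (⋃ g : G, ((MulAut.conj g • H : Subgroup G) : Set G)).ncard ≤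
      H.index * (Nat.card H - 1) + 1 := by
  have := Fintype.ofFinite (G ⧸ H)
  let conjOf (q : G ⧸ H) : Set G := (MulAut.conj q.out • H : Subgroup G)
  have hcover : (⋃ g : G, ((MulAut.conj g • H : Subgroup G) : Set G)) ⊆
      insert 1 (⋃ q, conjOf q \ {1}) := by
    rintro x hx
    obtain ⟨g, hg⟩ := Set.mem_iUnion.mp hx
    by_cases hx1 : x = 1
    · exact Or.inl hx1
    refine Or.inr (Set.mem_iUnion.mpr ⟨QuotientGroup.mk g, ?_, hx1⟩)
    simpa only [conjOf, conj_out_mk_smul] using hg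
  have hcard (q : G ⧸ H) : (conjOf q \ {1}).ncard = Nat.card H - 1 := by
    rw [Set.ncard_sdiff_singleton_of_mem (one_mem _), coe_pointwise_smul, Set.ncard_smul_set,
      ← Nat.card_coe_set_eq]
    rfl
  calc _ ≤ (insert 1 (⋃ q, conjOf q \ {1})).ncard := Set.ncard_le_ncard hcover
    _ ≤ (⋃ q, conjOf q \ {1}).ncard + 1 := Set.ncard_insert_le _ _
    _ ≤ (∑ q, (conjOf q \ {1}).ncard) + 1 := by gcongr; exact Set.ncard_iUnion_le_of_fintype _
    _ = H.index * (Nat.card H - 1) + 1 := by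
      simp only [hcard, Finset.sum_const, Finset.card_univ, smul_eq_mul, index,
        Nat.card_eq_fintype_card]

theorem eq_top_of_iUnion_conj_smul_eq_univ [Finite G]
    (hH : ⋃ g : G, ((MulAut.conj g • H : Subgroup G) : Set G) = Set.univ) : H = ⊤ := by
  have hle := H.ncard_iUnion_conj_smul_le
  rw [hH, Set.ncard_univ, ← H.index_mul_card] at hle
  obtain ⟨c, hc⟩ := Nat.exists_eq_add_one_of_ne_zero (Nat.card_pos (α := H)).ne'
  have : H.index ≤ 1 := by
    rw [hc, Nat.add_sub_cancel, mul_add_one] at hle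
    omega
  exact index_eq_one.mp (le_antisymm this (Nat.one_le_iff_ne_zero.mpr index_ne_zero_of_finite))

end Subgroup

/-- If a subset `S` of a finite group `G` meets every conjugacy class of `G`,
then the subgroup generated by `S` is all of `G`. -/
theorem stmt_1 (G : Type*) [Group G] [Finite G] (S : Set G)
    (hS : ∀ g : G, ∃ s ∈ S, IsConj s g) :
    Subgroup.closure S = ⊤ := by
  refine (Subgroup.closure S).eq_top_of_iUnion_conj_smul_eq_univ
    (Set.eq_univ_of_forall fun g => ?_)
  obtain ⟨s, hs, hsg⟩ := hS g
  obtain ⟨c, rfl⟩ := isConj_iff.mp hsg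
  exact Set.mem_iUnion.mpr
    ⟨c, Subgroup.smul_mem_pointwise_smul _ _ _ (Subgroup.subset_closure hs)⟩
end

section
/- Let A be a finite-dimensional algebra over the finite field F_q, and let a, b ∈ A^× be units that are conjugate by a unit of A ⊗_{F_q} \bar{F}_q. Then a and b are conjugate by a unit of A itself. -/
/-!
For `t ∈ A`, make `A` a module `M_t` over `A[X]` by letting `A` act by left multiplication and `X`
by right multiplication by `t`; then `M_s ≅ M_t` exactly when `s` and `t` are conjugate in `A`.
The coefficients of a conjugating unit over `F̄` and of its inverse generate a finite-dimensional
subalgebra `K`, over which `1 ⊗ a` and `1 ⊗ b` are already conjugate. As a module over `A[X]`, `K ⊗ A` with `X`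
acting by `1 ⊗ t` is `M_t ^ n` with `n = dim K`, so `M_a ^ n ≅ M_b ^ n`. Finite modules cancel
from such powers: `|Hom(X, M ^ n)| = |Hom(X, M)| ^ n`, and sorting homomorphisms by their kernel
shows that the numbers `|Hom(X, M)|`, `X` finite, determine the numbers of injections `X ↪ M`,
hence `M` up to isomorphism. So `M_a ≅ M_b`.
-/

open Function Polynomial TensorProduct

section Cancellation

universe u

variable {R : Type*} [Ring R]

instance Submodule.finite_of_finite (X : Type*) [AddCommGroup X] [Module R X] [Finite X] :
    Finite (Submodule R X) :=
  Finite.of_injective _ SetLike.coe_injective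

instance LinearMap.finite_of_finite (X M : Type*) [AddCommGroup X] [Module R X] [AddCommGroup M]
    [Module R M] [Finite X] [Finite M] : Finite (X →ₗ[R] M) :=
  Finite.of_injective _ DFunLike.coe_injective

def linearMapKerEqEquiv (X M : Type*) [AddCommGroup X] [Module R X] [AddCommGroup M]
    [Module R M] (p : Submodule R X) :
    {f : X →ₗ[R] M // LinearMap.ker f = p} ≃ {g : X ⧸ p →ₗ[R] M // Injective g} where
  toFun f := ⟨p.liftQ f.1 f.2.ge, by
    rw [← LinearMap.ker_eq_bot, Submodule.ker_liftQ_eq_bot]; exact f.2.le⟩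
  invFun g := ⟨g.1.comp p.mkQ, by
    rw [LinearMap.ker_comp, LinearMap.ker_eq_bot.2 g.2, Submodule.comap_bot, Submodule.ker_mkQ]⟩
  left_inv f := by ext; simp
  right_inv g := Subtype.ext (Submodule.linearMap_qext _ (Submodule.liftQ_mkQ _ _ _))

lemma card_linearMap_eq_sum_card_injective (X M : Type*) [AddCommGroup X] [Module R X]
    [AddCommGroup M] [Module R M] [Finite X] [Finite M] [Fintype (Submodule R X)] :
    Nat.card (X →ₗ[R] M) = ∑ p : Submodule R X, Nat.card {g : X ⧸ p →ₗ[R] M // Injective g} := by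
  rw [← Nat.card_congr (Equiv.sigmaFiberEquiv fun f : X →ₗ[R] M => LinearMap.ker f),
    Nat.card_sigma]
  exact Finset.sum_congr rfl fun p _ => Nat.card_congr (linearMapKerEqEquiv X M p)

lemma Submodule.card_quotient_lt {X : Type*} [AddCommGroup X] [Module R X] [Finite X]
    {p : Submodule R X} (hp : p ≠ ⊥) : Nat.card (X ⧸ p) < Nat.card X := by
  refine (Nat.card_le_card_of_surjective _ p.mkQ_surjective).lt_of_ne fun h => hp ?_
  rw [← p.ker_mkQ, LinearMap.ker_eq_bot]
  exact ((Nat.bijective_iff_surjective_and_card _).2 ⟨p.mkQ_surjective, h.symm⟩).injective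

theorem card_injective_eq_of_card_linearMap_eq {M N : Type u} [AddCommGroup M] [Module R M]
    [AddCommGroup N] [Module R N] [Finite M] [Finite N]
    (h : ∀ (X : Type u) [AddCommGroup X] [Module R X] [Finite X],
      Nat.card (X →ₗ[R] M) = Nat.card (X →ₗ[R] N))
    (X : Type u) [AddCommGroup X] [Module R X] [Finite X] :
    Nat.card {f : X →ₗ[R] M // Injective f} = Nat.card {f : X →ₗ[R] N // Injective f} := by
  induction hX : Nat.card X using Nat.strong_induction_on generalizing X with
  | _ n ih =>
    classical
    let := Fintype.ofFinite (Submodule R X)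
    have : ∀ p : Submodule R X, Finite (X ⧸ p) := fun p => Quotient.finite _
    have hsum := card_linearMap_eq_sum_card_injective (R := R) X M
    rw [h X, card_linearMap_eq_sum_card_injective, Fintype.sum_eq_add_sum_compl ⊥,
      Fintype.sum_eq_add_sum_compl ⊥] at hsum
    have hproper : ∀ p ∈ ({⊥}ᶜ : Finset (Submodule R X)),
        Nat.card {g : X ⧸ p →ₗ[R] N // Injective g} =
          Nat.card {g : X ⧸ p →ₗ[R] M // Injective g} := fun p hp =>
      (ih _ (hX ▸ Submodule.card_quotient_lt (by simpa using hp)) (X ⧸ p) rfl).symm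
    have hbot (P : Type u) [AddCommGroup P] [Module R P] :
        Nat.card {g : X ⧸ (⊥ : Submodule R X) →ₗ[R] P // Injective g} =
          Nat.card {f : X →ₗ[R] P // Injective f} :=
      Nat.card_congr ((linearMapKerEqEquiv X P ⊥).symm.trans
        (Equiv.subtypeEquivRight fun _ => LinearMap.ker_eq_bot))
    rw [Finset.sum_congr rfl hproper, Nat.add_right_cancel_iff, hbot, hbot] at hsum
    exact hsum.symm

theorem nonempty_linearEquiv_of_card_linearMap_eq {M N : Type u} [AddCommGroup M] [Module R M]
    [AddCommGroup N] [Module R N] [Finite M] [Finite N]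
    (h : ∀ (X : Type u) [AddCommGroup X] [Module R X] [Finite X],
      Nat.card (X →ₗ[R] M) = Nat.card (X →ₗ[R] N)) :
    Nonempty (M ≃ₗ[R] N) := by
  have hid (P : Type u) [AddCommGroup P] [Module R P] [Finite P] :
      0 < Nat.card {f : P →ₗ[R] P // Injective f} :=
    Nat.card_pos_iff.2 ⟨⟨⟨LinearMap.id, injective_id⟩⟩, Subtype.finite⟩
  obtain ⟨⟨f, hf⟩⟩ := (Nat.card_pos_iff.1
    ((hid M).trans_eq (card_injective_eq_of_card_linearMap_eq h M))).1
  obtain ⟨⟨g, hg⟩⟩ := (Nat.card_pos_iff.1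
    ((hid N).trans_eq (card_injective_eq_of_card_linearMap_eq (fun X _ _ _ => (h X).symm) N))).1
  have hcard := (Nat.card_le_card_of_injective f hf).antisymm (Nat.card_le_card_of_injective g hg)
  exact ⟨.ofBijective f ((Nat.bijective_iff_injective_and_card f).2 ⟨hf, hcard⟩)⟩

lemma card_linearMap_pi (X M ι : Type*) [AddCommGroup X] [Module R X] [AddCommGroup M]
    [Module R M] [Finite ι] :
    Nat.card (X →ₗ[R] (ι → M)) = Nat.card (X →ₗ[R] M) ^ Nat.card ι := by
  rw [← Nat.card_fun]
  exact Nat.card_congr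
    { toFun f i := (LinearMap.proj i).comp f
      invFun := LinearMap.pi
      left_inv _ := rfl
      right_inv _ := rfl }

theorem nonempty_linearEquiv_of_pi_linearEquiv {M N : Type u} [AddCommGroup M] [Module R M]
    [AddCommGroup N] [Module R N] [Finite M] [Finite N] {ι : Type*} [Finite ι] [Nonempty ι]
    (e : (ι → M) ≃ₗ[R] (ι → N)) : Nonempty (M ≃ₗ[R] N) := by
  refine nonempty_linearEquiv_of_card_linearMap_eq fun X _ _ _ => ?_
  refine Nat.pow_left_injective (Nat.card_pos (α := ι)).ne' ?_
  simp only [← card_linearMap_pi]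
  exact Nat.card_congr
    { toFun f := e.toLinearMap ∘ₗ f
      invFun f := e.symm.toLinearMap ∘ₗ f
      left_inv f := by ext; simp
      right_inv f := by ext; simp }

end Cancellation

theorem Polynomial.map_smul_of_map_C_smul_of_map_X_smul {A M N : Type*} [Semiring A]
    [AddCommMonoid M] [Module A[X] M] [AddCommMonoid N] [Module A[X] N] (f : M →+ N)
    (hC : ∀ (c : A) (x : M), f ((C c : A[X]) • x) = (C c : A[X]) • f x)
    (hX : ∀ x : M, f ((X : A[X]) • x) = (X : A[X]) • f x)
    (p : A[X]) (x : M) : f (p • x) = p • f x := by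
  have hXpow (n : ℕ) (x : M) : f ((X : A[X]) ^ n • x) = (X : A[X]) ^ n • f x := by
    induction n generalizing x with
    | zero => simp
    | succ n ih => rw [pow_succ, mul_smul, mul_smul, ih, hX]
  induction p using Polynomial.induction_on' with
  | add p q hp hq => rw [add_smul, add_smul, map_add, hp, hq]
  | monomial n c => rw [← C_mul_X_pow_eq_monomial, mul_smul, mul_smul, hC, hXpow]

section Conjugacy

variable {A B : Type*} [Ring A] [Ring B]

/-- `ConjModule ι t` is `B` as a module over `A[X]`, where `c : A` acts by left multiplication by
`ι c` and `X` acts by right multiplication by `t`. -/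
def ConjModule (_ : A →+* B) (_ : B) : Type _ := B

namespace ConjModule

section Basic

variable (ι : A →+* B) (t : B)

instance : AddCommGroup (ConjModule ι t) := inferInstanceAs (AddCommGroup B)

instance [Finite B] : Finite (ConjModule ι t) := inferInstanceAs (Finite B)

noncomputable instance : Module A[X] (ConjModule ι t) :=
  Module.compHom B <| eval₂RingHom' ((Module.toAddMonoidEnd B B).comp ι)
    (AddMonoid.End.mulRight t) fun c => by ext x; exact (mul_assoc (ι c) x t).symm

def of : B ≃+ ConjModule ι t := AddEquiv.refl B

variable {ι t}

@[simp]
lemma C_smul_of (c : A) (x : B) : (C c : A[X]) • of ι t x = of ι t (ι c * x) := by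
  change (eval₂ _ _ (C c) : AddMonoid.End B) x = ι c * x
  rw [eval₂_C]
  rfl

@[simp]
lemma X_smul_of (x : B) : (X : A[X]) • of ι t x = of ι t (x * t) := by
  change (eval₂ _ _ X : AddMonoid.End B) x = x * t
  rw [eval₂_X]
  rfl

theorem nonempty_linearEquiv_of_isConj {s : B} (h : IsConj s t) :
    Nonempty (ConjModule ι s ≃ₗ[A[X]] ConjModule ι t) := by
  obtain ⟨u, hu⟩ := h
  let ρ : B ≃+ B :=
    { toFun x := x * u, invFun x := x * ((u⁻¹ : Bˣ) : B), left_inv := u.mul_inv_cancel_right,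
      right_inv := u.inv_mul_cancel_right, map_add' x y := add_mul x y u }
  let ψ : ConjModule ι t ≃+ ConjModule ι s := (of ι t).symm.trans (ρ.trans (of ι s))
  refine ⟨(ψ.toLinearEquiv (map_smul_of_map_C_smul_of_map_X_smul ψ.toAddMonoidHom ?_ ?_)).symm⟩
  · intro c x
    obtain ⟨x, rfl⟩ := (of ι t).surjective x
    simp [ψ, ρ, mul_assoc]
  · intro x
    obtain ⟨x, rfl⟩ := (of ι t).surjective x
    simp [ψ, ρ, mul_assoc, hu.eq]

end Basic

section Self

variable {s t : A}

lemma linearMap_apply_of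
    (f : ConjModule (RingHom.id A) s →ₗ[A[X]] ConjModule (RingHom.id A) t) (x : A) :
    f (of _ s x) = of _ t (x * (of _ t).symm (f (of _ s 1))) := by
  have h := f.map_smul (C x) (of _ s 1)
  rw [C_smul_of, RingHom.id_apply, mul_one] at h
  rw [h, ← (of _ t).apply_symm_apply (f (of _ s 1)), C_smul_of]
  simp

lemma semiconjBy_of_linearMap
    (f : ConjModule (RingHom.id A) s →ₗ[A[X]] ConjModule (RingHom.id A) t) :
    SemiconjBy ((of _ t).symm (f (of _ s 1))) t s := by
  have h := f.map_smul X (of _ s 1)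
  rw [X_smul_of, one_mul, linearMap_apply_of, ← (of _ t).apply_symm_apply (f (of _ s 1)),
    X_smul_of] at h
  exact ((of _ t).injective h).symm

lemma of_symm_mul_of_symm_eq_one
    (e : ConjModule (RingHom.id A) s ≃ₗ[A[X]] ConjModule (RingHom.id A) t) :
    (of _ t).symm (e (of _ s 1)) * (of _ s).symm (e.symm (of _ t 1)) = 1 := by
  have h := e.symm_apply_apply (of _ s 1)
  have h' := linearMap_apply_of e.symm.toLinearMap ((of _ t).symm (e (of _ s 1)))
  rw [AddEquiv.apply_symm_apply, LinearEquiv.coe_coe] at h'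
  rw [h'] at h
  exact (of _ s).injective h

theorem isConj_of_linearEquiv
    (e : ConjModule (RingHom.id A) s ≃ₗ[A[X]] ConjModule (RingHom.id A) t) : IsConj s t :=
  ⟨⟨_, _, of_symm_mul_of_symm_eq_one e.symm, of_symm_mul_of_symm_eq_one e⟩,
    semiconjBy_of_linearMap e.symm.toLinearMap⟩

end Self

/-- The `A[X]`-linear equivalence `v ↦ ∑ i, b i ⊗ v i`. -/
noncomputable def piLinearEquivTensor {F K : Type*} [CommRing F] [Ring K] [Algebra F K]
    [Algebra F A] {ι : Type*} [Fintype ι] [DecidableEq ι] (b : Module.Basis ι F K) (t : A) :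
    (ι → ConjModule (RingHom.id A) t) ≃ₗ[A[X]]
      ConjModule ((Algebra.TensorProduct.includeRight : A →ₐ[F] K ⊗[F] A) : A →+* K ⊗[F] A)
        ((1 : K) ⊗ₜ[F] t) :=
  let e₀ : K ⊗[F] A ≃ₗ[F] (ι → A) :=
    (equivFinsuppOfBasisLeft b).trans (Finsupp.linearEquivFunOnFinite F A ι)
  have mul_left (c : A) (x : K ⊗[F] A) (i : ι) : e₀ ((1 ⊗ₜ c) * x) i = c * e₀ x i := by
    induction x using TensorProduct.induction_on with
    | zero => simp
    | tmul k a => simp [e₀]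
    | add x y hx hy => simp_all [mul_add]
  have mul_right (x : K ⊗[F] A) (i : ι) : e₀ (x * (1 ⊗ₜ t)) i = e₀ x i * t := by
    induction x using TensorProduct.induction_on with
    | zero => simp
    | tmul k a => simp [e₀]
    | add x y hx hy => simp_all [add_mul]
  let φ := (of _ _).symm.trans (e₀.toAddEquiv.trans (AddEquiv.piCongrRight fun _ => of _ t))
  (φ.toLinearEquiv <| map_smul_of_map_C_smul_of_map_X_smul φ.toAddMonoidHom
    (fun c x => by
      obtain ⟨x, rfl⟩ := (of _ _).surjective x
      funext i
      simp [φ, mul_left])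
    (fun x => by
      obtain ⟨x, rfl⟩ := (of _ _).surjective x
      funext i
      simp [φ, mul_right])).symm

end ConjModule

lemma TensorProduct.exists_finset_mem_range_map {F Ω : Type*} [CommSemiring F] [CommSemiring Ω]
    [Algebra F Ω] {A : Type*} [Semiring A] [Algebra F A] (x : Ω ⊗[F] A) :
    ∃ S : Finset Ω, ∀ K : Subalgebra F Ω, (S : Set Ω) ⊆ K →
      x ∈ (Algebra.TensorProduct.map K.val (AlgHom.id F A)).range := by
  classical
  obtain ⟨S, rfl⟩ := TensorProduct.exists_finset x
  refine ⟨S.image Prod.fst, fun K hK => Subalgebra.sum_mem _ fun p hp => ?_⟩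
  exact ⟨⟨p.1, hK (Finset.mem_image_of_mem _ hp)⟩ ⊗ₜ p.2, by simp⟩

theorem IsConj.exists_finiteDimensional_subalgebra {F Ω : Type*} [Field F] [CommRing Ω]
    [Algebra F Ω] [Algebra.IsIntegral F Ω] [Algebra F A] {s t : A}
    (h : IsConj ((1 : Ω) ⊗ₜ[F] s) (1 ⊗ₜ t)) :
    ∃ K : Subalgebra F Ω, FiniteDimensional F K ∧ IsConj ((1 : K) ⊗ₜ[F] s) (1 ⊗ₜ t) := by
  classical
  obtain ⟨u, hu⟩ := h
  obtain ⟨S₁, hS₁⟩ := TensorProduct.exists_finset_mem_range_map (A := A) (u : Ω ⊗[F] A)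
  obtain ⟨S₂, hS₂⟩ := TensorProduct.exists_finset_mem_range_map (A := A) (↑u⁻¹ : Ω ⊗[F] A)
  let K := Algebra.adjoin F ((S₁ ∪ S₂ : Finset Ω) : Set Ω)
  have hfin : FiniteDimensional F K := Algebra.finite_adjoin_of_finite_of_isIntegral
    (Finset.finite_toSet _) fun x _ => Algebra.IsIntegral.isIntegral x
  let j := Algebra.TensorProduct.map K.val (AlgHom.id F A)
  have hj : Injective j :=
    Module.Flat.rTensor_preserves_injective_linearMap K.val.toLinearMap Subtype.val_injective
  obtain ⟨v, hv : j v = u⟩ := hS₁ K (subset_trans (by simp) Algebra.subset_adjoin)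
  obtain ⟨w, hw : j w = ↑u⁻¹⟩ := hS₂ K (subset_trans (by simp) Algebra.subset_adjoin)
  have hj_one_tmul (x : A) : j (1 ⊗ₜ x) = 1 ⊗ₜ x := by simp [j]
  refine ⟨K, hfin, ⟨v, w, hj (by simp [hv, hw]), hj (by simp [hv, hw])⟩, hj ?_⟩
  simpa [hv, hj_one_tmul] using hu.eq

theorem isConj_of_isConj_one_tmul {F K : Type*} [Field F] [Ring K] [Algebra F K]
    [FiniteDimensional F K] [Nontrivial K] [Algebra F A] [Finite A] {s t : A}
    (h : IsConj ((1 : K) ⊗ₜ[F] s) (1 ⊗ₜ t)) : IsConj s t := by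
  classical
  let b := Module.Free.chooseBasis F K
  have := b.index_nonempty
  obtain ⟨e⟩ := ConjModule.nonempty_linearEquiv_of_isConj
    (ι := ((Algebra.TensorProduct.includeRight : A →ₐ[F] K ⊗[F] A) : A →+* K ⊗[F] A)) h
  obtain ⟨e'⟩ := nonempty_linearEquiv_of_pi_linearEquiv
    ((ConjModule.piLinearEquivTensor b s).trans (e.trans (ConjModule.piLinearEquivTensor b t).symm))
  exact ConjModule.isConj_of_linearEquiv e'

end Conjugacy

open TensorProduct in
/-- Let `A` be a finite-dimensional algebra over the finite field `F`, and let
`a, b ∈ A^×` be units that are conjugate by a unit of `A ⊗_F F̄`. Then `a` and `b`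
are conjugate by a unit of `A` itself. -/
theorem stmt_2 (F : Type*) [Field F] [Finite F]
    (A : Type*) [Ring A] [Algebra F A] [FiniteDimensional F A]
    (a b : Aˣ)
    (h : ∃ u : (AlgebraicClosure F ⊗[F] A)ˣ,
      (Algebra.TensorProduct.includeRight (R := F) (A := AlgebraicClosure F) (a : A)) =
        (u : AlgebraicClosure F ⊗[F] A) *
          Algebra.TensorProduct.includeRight (b : A) *
          ((u⁻¹ : (AlgebraicClosure F ⊗[F] A)ˣ) : AlgebraicClosure F ⊗[F] A)) :
    ∃ v : Aˣ, (a : A) = (v : A) * (b : A) * ((v⁻¹ : Aˣ) : A) := by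
  obtain ⟨u, hu⟩ := h
  have hconj : IsConj ((1 : AlgebraicClosure F) ⊗ₜ[F] (b : A)) (1 ⊗ₜ (a : A)) :=
    ⟨u, ((Units.eq_mul_inv_iff_mul_eq _).1 hu).symm⟩
  obtain ⟨K, _, hK⟩ := hconj.exists_finiteDimensional_subalgebra
  have : Finite A := Module.finite_of_finite F
  obtain ⟨v, hv⟩ := isConj_of_isConj_one_tmul hK
  exact ⟨v, (Units.eq_mul_inv_iff_mul_eq _).2 hv.eq.symm⟩
end

section
/- Let K be a field containing F_q and A ∈ GL_n(K). Every solution X ∈ \bar{K}^n of the system A X^{(q)} = X has all its coordinates in the separable closure K_sep of K. -/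
/-!
Let `E` be the separable closure of `K` in `K̄`. As `K̄/E` is purely inseparable, every
coordinate of `X` has some `q^m`-th power in `E`. Applying the ring endomorphism `x ↦ x^{q^m}`
to `X = A X^{(q)}` gives `X^{(q^m)} = A^{(q^m)} X^{(q^{m+1})}`, and `A` has entries in `E`,
so membership in `E` descends from `X^{(q^{m+1})}` to `X^{(q^m)}` and finally to `X`.
-/

open Matrix

theorem Subring.mem_of_mulVec_comp_eq {R ι : Type*} [CommRing R] [Fintype ι] (S : Subring R)
    {φ : R →+* R} (hφ : Set.MapsTo φ S S) {A : Matrix ι ι R} (hA : ∀ i j, A i j ∈ S)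
    {X : ι → R} (hX : A *ᵥ (φ ∘ X) = X) (hXφ : ∀ i, ∃ m, φ^[m] (X i) ∈ S) (i : ι) :
    X i ∈ S := by
  have descend (m : ℕ) (h : ∀ k, φ^[m + 1] (X k) ∈ S) (j : ι) : φ^[m] (X j) ∈ S := by
    have hj : φ^[m] (X j) = ∑ k, φ^[m] (A j k) * φ^[m + 1] (X k) := by
      rw [← RingHom.coe_pow]
      nth_rw 1 [← hX]
      simp only [mulVec, dotProduct, map_sum, map_mul, RingHom.coe_pow, Function.comp_apply,
        Function.iterate_succ_apply]
    rw [hj]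
    exact sum_mem fun k _ => mul_mem (hφ.iterate m (hA j k)) (h k)
  choose m hm using hXφ
  have hM (j : ι) : φ^[Finset.univ.sup m] (X j) ∈ S := by
    rw [← Nat.sub_add_cancel (Finset.le_sup (Finset.mem_univ j)), Function.iterate_add_apply]
    exact hφ.iterate _ (hm j)
  generalize Finset.univ.sup m = M at hM
  induction M with
  | zero => exact hM i
  | succ M ih => exact ih (descend M hM)

theorem IsPurelyInseparable.exists_pow_card_pow_mem (F : Type*) {S E : Type*} [Field F]
    [Fintype F] [Field S] [Field E] [Algebra S E] [Algebra F E] [IsPurelyInseparable S E]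
    (x : E) : ∃ k, x ^ Fintype.card F ^ k ∈ (algebraMap S E).range := by
  obtain ⟨p, _, r, hp, hcard⟩ := FiniteField.card' F
  have : CharP E p := charP_of_injective_algebraMap' F p
  have : ExpChar E p := .prime hp
  have : ExpChar S p := (algebraMap S E).expChar (algebraMap S E).injective p
  obtain ⟨k, hk⟩ := IsPurelyInseparable.pow_mem S p x
  obtain ⟨c, hc⟩ : p ^ k ∣ Fintype.card F ^ k :=
    hcard ▸ pow_dvd_pow_of_dvd (dvd_pow_self p r.ne_zero) k
  refine ⟨k, ?_⟩
  rw [hc, pow_mul]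
  exact Subring.pow_mem _ hk c

theorem stmt_7_general (F : Type*) [Field F] [Fintype F] (q : ℕ) (hq : q = Fintype.card F)
    (K : Type*) [Field K] [Algebra F K]
    (n : ℕ) (A : Matrix (Fin n) (Fin n) K)
    (X : Fin n → AlgebraicClosure K)
    (hX : (A.map (algebraMap K (AlgebraicClosure K))).mulVec (fun i => X i ^ q) = X) :
    ∀ i, IsSeparable K (X i) := by
  subst hq
  let E := separableClosure K (AlgebraicClosure K)
  let φ : AlgebraicClosure K →+* AlgebraicClosure K :=
    (FiniteField.frobeniusAlgHom F (AlgebraicClosure K)).toRingHom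
  have hφ_iterate (m : ℕ) (x : AlgebraicClosure K) : φ^[m] x = x ^ Fintype.card F ^ m :=
    congrFun (pow_iterate _ m) x
  intro i
  refine mem_separableClosure_iff.mp <|
    E.toSubring.mem_of_mulVec_comp_eq (φ := φ) (fun x hx => pow_mem hx _)
      (fun j k => E.algebraMap_mem (A j k)) hX (fun j => ?_) i
  obtain ⟨k, y, hy⟩ := IsPurelyInseparable.exists_pow_card_pow_mem F (S := E) (X j)
  exact ⟨k, hφ_iterate k _ ▸ hy ▸ y.2⟩

/-- Let `K ⊇ F_q` and `A ∈ GL_n(K)`. Every solution `X ∈ K̄^n` of `A X^{(q)} = X` has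
all its coordinates separable over `K`. -/
theorem stmt_7 (F : Type*) [Field F] [Fintype F] (q : ℕ) (hq : q = Fintype.card F)
    (K : Type*) [Field K] [Algebra F K]
    (n : ℕ) (A : Matrix (Fin n) (Fin n) K) (hA : IsUnit A)
    (X : Fin n → AlgebraicClosure K)
    (hX : (A.map (algebraMap K (AlgebraicClosure K))).mulVec (fun i => X i ^ q) = X) :
    ∀ i, IsSeparable K (X i) :=
  stmt_7_general F q hq K n A X hX
end

section
/- Let K be a field containing F_q, A ∈ GL_n(K), and E ⊆ K_sep the field generated over K by the coordinates of all solutions of A X^{(q)} = X. Then E/K is a finite Galois extension. -/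
/-!
The map `X ↦ A X^{(q)}` is semilinear for the `q`-Frobenius, whose fixed field is `F`. By a
minimal-relation argument, `F`-independent fixed vectors of such a map stay independent over the
big field, so the solutions span an `F`-space of dimension at most `n` and are finitely many.
Each coordinate of a solution lies in the `K`-span of the `q ^ m`-th powers of the coordinates
for every `m`; for large `m` these powers are separable, hence so are the coordinates. Finally,
`K`-embeddings permute the solutions, so the field they generate is normal.
-/

open Matrix IntermediateField

section FixedPoints

variable {F L V : Type*} [Field F] [Field L] [Algebra F L] [AddCommGroup V] [Module L V]
  [Module F V] [IsScalarTower F L V] {σ : L →+* L}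

theorem LinearIndependent.of_isFixedPt_semilinearMap
    (hσ : ∀ c, σ c = c → c ∈ Set.range (algebraMap F L)) (φ : V →ₛₗ[σ] V)
    {ι : Type*} {v : ι → V} (hfix : ∀ i, φ (v i) = v i) (hv : LinearIndependent F v) :
    LinearIndependent L v := by
  classical
  rw [linearIndependent_iff'] at hv ⊢
  intro s
  induction s using Finset.induction_on with
  | empty => simp
  | insert a s ha ih =>
    intro g hg
    by_cases hga : g a = 0
    · rw [Finset.sum_insert ha, hga, zero_smul, zero_add] at hg
      simpa [hga] using ih g hg
    exfalso
    set h : ι → L := fun i => (g a)⁻¹ * g i with h_def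
    have ha1 : h a = 1 := inv_mul_cancel₀ hga
    have hrel : ∑ i ∈ insert a s, h i • v i = 0 := by
      simp only [h_def, mul_smul, ← Finset.smul_sum, hg, smul_zero]
    have hrelσ : ∑ i ∈ insert a s, σ (h i) • v i = 0 := by
      simpa [map_sum, hfix] using congrArg φ hrel
    have hdiff : ∑ i ∈ s, (σ (h i) - h i) • v i = 0 := by
      have := congrArg₂ (· - ·) hrelσ hrel
      simpa [← Finset.sum_sub_distrib, ← sub_smul, Finset.sum_insert ha, ha1] using this
    have hfixed : ∀ i ∈ insert a s, ∃ c : F, algebraMap F L c = h i := by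
      intro i hi
      rcases Finset.mem_insert.mp hi with rfl | hi
      · exact ⟨1, by rw [map_one, ha1]⟩
      · exact hσ _ (sub_eq_zero.mp (ih _ hdiff i hi))
    choose! c hc using hfixed
    have hrelF : ∑ i ∈ insert a s, c i • v i = 0 := by
      rw [← hrel]
      refine Finset.sum_congr rfl fun i hi => ?_
      rw [← algebraMap_smul L, hc i hi]
    have := hc a (Finset.mem_insert_self a s)
    rw [hv _ c hrelF a (Finset.mem_insert_self a s), map_zero, ha1] at this
    exact zero_ne_one this

theorem finite_fixedPoints_semilinearMap [Finite F] [FiniteDimensional L V]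
    (hσ : ∀ c, σ c = c → c ∈ Set.range (algebraMap F L)) (φ : V →ₛₗ[σ] V) :
    (Function.fixedPoints φ).Finite := by
  obtain ⟨b, hb, hspan, hbF⟩ := exists_linearIndependent F (Function.fixedPoints φ)
  have hbL : LinearIndependent L ((↑) : b → V) :=
    hbF.of_isFixedPt_semilinearMap hσ φ fun x => hb x.2
  have : FiniteDimensional F (Submodule.span F (Function.fixedPoints φ)) :=
    hspan ▸ FiniteDimensional.span_of_finite F hbL.setFinite
  have : Finite (Submodule.span F (Function.fixedPoints φ)) := Module.finite_of_finite F
  exact (Set.toFinite (Submodule.span F (Function.fixedPoints φ) : Set V)).subset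
    Submodule.subset_span

end FixedPoints

open Polynomial in
theorem FiniteField.mem_range_algebraMap_of_pow_card_eq {F L : Type*} [Field F] [Fintype F]
    [Field L] [Algebra F L] {c : L} (hc : c ^ Fintype.card F = c) :
    c ∈ Set.range (algebraMap F L) := by
  have hq : 1 < Fintype.card F := Fintype.one_lt_card
  have hroots : ((X ^ Fintype.card F - X : F[X]).map (algebraMap F L)).roots =
      Finset.univ.val.map (algebraMap F L) := by
    rw [← roots_X_pow_card_sub_X F]
    refine (roots_map_of_injective_of_card_eq_natDegree (algebraMap F L).injective ?_).symm
    rw [roots_X_pow_card_sub_X, X_pow_card_sub_X_natDegree_eq F hq]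
    rfl
  have hmem : c ∈ ((X ^ Fintype.card F - X : F[X]).map (algebraMap F L)).roots := by
    rw [mem_roots (by simpa using X_pow_card_sub_X_ne_zero L hq)]
    simp [hc]
  rw [hroots] at hmem
  obtain ⟨a, -, rfl⟩ := Multiset.mem_map.mp hmem
  exact ⟨a, rfl⟩

section FrobeniusTwist

variable (F : Type*) [Field F] [Fintype F] {L : Type*} [Field L] [Algebra F L]
  {ι : Type*} [Fintype ι]

def Matrix.frobeniusMulVec (B : Matrix ι ι L) :
    (ι → L) →ₛₗ[(FiniteField.frobeniusAlgHom F L : L →+* L)] (ι → L) where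
  toFun X := B *ᵥ fun i => X i ^ Fintype.card F
  map_add' X Y := by
    rw [← mulVec_add]
    congr 1 with i
    exact map_add (FiniteField.frobeniusAlgHom F L) (X i) (Y i)
  map_smul' c X := by
    rw [← mulVec_smul]
    congr 1 with i
    exact mul_pow c (X i) _

theorem Matrix.finite_setOf_mulVec_pow_card_eq (B : Matrix ι ι L) :
    {X : ι → L | B *ᵥ (fun i => X i ^ Fintype.card F) = X}.Finite :=
  finite_fixedPoints_semilinearMap (F := F)
    (fun _ hc => FiniteField.mem_range_algebraMap_of_pow_card_eq hc) (B.frobeniusMulVec F)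

end FrobeniusTwist

theorem mem_span_pow_pow_of_mulVec_pow_card_eq (F : Type*) [Field F] [Fintype F]
    {K L : Type*} [Field K] [Field L] [Algebra K L] [Algebra F L]
    {ι : Type*} [Fintype ι] {A : Matrix ι ι K} {X : ι → L}
    (hX : A.map (algebraMap K L) *ᵥ (fun i => X i ^ Fintype.card F) = X) (m : ℕ) (j : ι) :
    X j ∈ Submodule.span K (Set.range fun t => X t ^ Fintype.card F ^ m) := by
  induction m with
  | zero =>
    simp_rw [pow_zero, pow_one]
    exact Submodule.subset_span ⟨j, rfl⟩
  | succ m ih =>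
    refine Submodule.span_le.mpr ?_ ih
    rintro _ ⟨t, rfl⟩
    have hφ (x : L) : (FiniteField.frobeniusAlgHom F L ^ m) x = x ^ Fintype.card F ^ m := by
      rw [AlgHom.coe_pow, FiniteField.coe_frobeniusAlgHom, pow_iterate]
    have hexpand : X t ^ Fintype.card F ^ m =
        ∑ l, A t l ^ Fintype.card F ^ m • X l ^ Fintype.card F ^ (m + 1) := by
      conv_lhs => rw [← hφ, ← hX]
      simp only [mulVec, dotProduct, map_sum, map_mul, Matrix.map_apply]
      simp only [hφ, Algebra.smul_def, map_pow, ← pow_mul, ← pow_succ']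
    simp only [hexpand]
    exact Submodule.sum_mem _ fun l _ => Submodule.smul_mem _ _ (Submodule.subset_span ⟨l, rfl⟩)

theorem isSeparable_of_forall_mem_span_pow_pow {K L : Type*} [Field K] [Field L] [Algebra K L]
    [Algebra.IsAlgebraic K L]
    (p : ℕ) [ExpChar K p] {q : ℕ} (hpq : p ∣ q) {ι : Type*} [Finite ι] {v : ι → L}
    (hv : ∀ m j, v j ∈ Submodule.span K (Set.range fun t => v t ^ q ^ m)) (j : ι) :
    IsSeparable K (v j) := by
  have : ExpChar (separableClosure K L) p :=
    expChar_of_injective_algebraMap (algebraMap K _).injective p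
  have hpow (t : ι) : ∃ e, v t ^ p ^ e ∈ separableClosure K L := by
    obtain ⟨e, y, hy⟩ := IsPurelyInseparable.pow_mem (separableClosure K L) p (v t)
    exact ⟨e, hy ▸ y.2⟩
  choose e he using hpow
  obtain ⟨M, hM⟩ := Finite.exists_le e
  have hsep (t : ι) : v t ^ q ^ M ∈ separableClosure K L := by
    obtain ⟨d, hd⟩ := (pow_dvd_pow p (hM t)).trans (pow_dvd_pow_of_dvd hpq M)
    rw [hd, pow_mul]
    exact pow_mem (he t) d
  have hspan : Submodule.span K (Set.range fun t => v t ^ q ^ M) ≤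
      Subalgebra.toSubmodule (separableClosure K L).toSubalgebra :=
    Submodule.span_le.mpr (Set.range_subset_iff.mpr hsep)
  exact mem_separableClosure_iff.mp (hspan (hv M j))

theorem normal_adjoin_of_forall_image_subset {K L : Type*} [Field K] [Field L] [Algebra K L]
    [Normal K L] {S : Set L} (hS : ∀ σ : L →ₐ[K] L, σ '' S ⊆ S) : Normal K (adjoin K S) :=
  normal_iff_forall_map_le.mpr fun σ => (adjoin_map K S σ).trans_le (adjoin.mono K _ _ (hS σ))

theorem mulVec_pow_algHom_comp_eq {K L : Type*} [Field K] [Field L] [Algebra K L]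
    {ι : Type*} [Fintype ι] {A : Matrix ι ι K} {q : ℕ} {X : ι → L}
    (hX : A.map (algebraMap K L) *ᵥ (fun i => X i ^ q) = X) (σ : L →ₐ[K] L) :
    A.map (algebraMap K L) *ᵥ (fun i => σ (X i) ^ q) = σ ∘ X := by
  funext i
  simpa [mulVec, dotProduct, map_sum] using congrArg (fun Y => σ (Y i)) hX

theorem stmt_8_general (F : Type*) [Field F] [Fintype F] (q : ℕ) (hq : q = Fintype.card F)
    (K : Type*) [Field K] [Algebra F K]
    (n : ℕ) (A : Matrix (Fin n) (Fin n) K)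
    (E : IntermediateField K (AlgebraicClosure K))
    (hE : E = IntermediateField.adjoin K
      {x : AlgebraicClosure K | ∃ X : Fin n → AlgebraicClosure K,
        (A.map (algebraMap K (AlgebraicClosure K))).mulVec (fun i => X i ^ q) = X ∧
          ∃ i, X i = x}) :
    IsGalois K E ∧ FiniteDimensional K E := by
  subst hq hE
  set S := {x : AlgebraicClosure K | ∃ X : Fin n → AlgebraicClosure K,
    A.map (algebraMap K _) *ᵥ (fun i => X i ^ Fintype.card F) = X ∧ ∃ i, X i = x}
  have : Finite S := by
    refine (((A.map (algebraMap K _)).finite_setOf_mulVec_pow_card_eq F).biUnion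
      fun X _ => Set.finite_range X).subset ?_
    rintro _ ⟨X, hX, i, rfl⟩
    exact Set.mem_biUnion hX ⟨i, rfl⟩
  obtain ⟨p, _, k, hp, hcard⟩ := FiniteField.card' F
  have : ExpChar F p := ExpChar.prime hp
  have : ExpChar K p := expChar_of_injective_algebraMap (algebraMap F K).injective p
  have : Algebra.IsSeparable K (adjoin K S) := by
    refine (isSeparable_adjoin_iff_isSeparable K _).mpr ?_
    rintro _ ⟨X, hX, i, rfl⟩
    exact isSeparable_of_forall_mem_span_pow_pow p (hcard ▸ dvd_pow_self p k.ne_zero)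
      (mem_span_pow_pow_of_mulVec_pow_card_eq F hX) i
  have : Normal K (adjoin K S) := by
    refine normal_adjoin_of_forall_image_subset ?_
    rintro σ _ ⟨_, ⟨X, hX, i, rfl⟩, rfl⟩
    exact ⟨σ ∘ X, mulVec_pow_algHom_comp_eq hX σ, i, rfl⟩
  exact ⟨⟨⟩, finiteDimensional_adjoin fun x _ =>
    (Algebra.IsAlgebraic.isAlgebraic x).isIntegral⟩

/-- Let `K ⊇ F_q`, `A ∈ GL_n(K)`, and `E` the subfield of `K̄` generated over `K` by the
coordinates of all solutions of `A X^{(q)} = X`. Then `E/K` is a finite Galois extension. -/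
theorem stmt_8 (F : Type*) [Field F] [Fintype F] (q : ℕ) (hq : q = Fintype.card F)
    (K : Type*) [Field K] [Algebra F K]
    (n : ℕ) (A : Matrix (Fin n) (Fin n) K) (hA : IsUnit A)
    (E : IntermediateField K (AlgebraicClosure K))
    (hE : E = IntermediateField.adjoin K
      {x : AlgebraicClosure K | ∃ X : Fin n → AlgebraicClosure K,
        (A.map (algebraMap K (AlgebraicClosure K))).mulVec (fun i => X i ^ q) = X ∧
          ∃ i, X i = x}) :
    IsGalois K E ∧ FiniteDimensional K E :=
  stmt_8_general F q hq K n A E hE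
end

section
/- Let R be a Noetherian integral domain containing F_q with fraction field K, and let A ∈ GL_n(R). Then every solution X ∈ \bar{K}^n of A X^{(q)} = X has coordinates that are integral over R. More precisely, there exist k ≥ 1 and c_0,...,c_{k-1} ∈ R such that every coordinate of every solution is a root of the monic additive polynomial T^{q^k} − Σ_{j=0}^{k-1} c_j T^{q^j}. -/
/-- Let `R` be a Noetherian integral domain containing `F_q` with fraction field `K`, and
`A ∈ GL_n(R)`. Then there exist `k ≥ 1` and `c_0, ..., c_{k-1} ∈ R` such that every
coordinate of every solution `X ∈ K̄^n` of `A X^{(q)} = X` is integral over `R`, being a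
root of the monic additive polynomial `T^{q^k} − Σ_j c_j T^{q^j}`. -/
theorem stmt_9 (F : Type*) [Field F] [Fintype F] (q : ℕ) (hq : q = Fintype.card F)
    (R : Type*) [CommRing R] [IsDomain R] [IsNoetherianRing R] [Algebra F R]
    (n : ℕ) (A : Matrix (Fin n) (Fin n) R) (hA : IsUnit A) :
    ∃ k : ℕ, 1 ≤ k ∧ ∃ c : Fin k → R,
      ∀ X : Fin n → AlgebraicClosure (FractionRing R),
        (A.map (algebraMap R (AlgebraicClosure (FractionRing R)))).mulVec
            (fun i => X i ^ q) = X →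
          ∀ i, IsIntegral R (X i) ∧
            X i ^ q ^ k = ∑ j : Fin k,
              algebraMap R (AlgebraicClosure (FractionRing R)) (c j) * X i ^ q ^ (j : ℕ) := by
  classical
  set Kb := AlgebraicClosure (FractionRing R) with hKb
  set alg := algebraMap R Kb with halg
  -- characteristic
  set p := ringChar F with hp
  haveI : CharP F p := ringChar.charP F
  obtain ⟨s, hps, hcard⟩ := FiniteField.card F p
  have hqps : q = p ^ (s : ℕ) := hq.trans hcard
  haveI : Fact p.Prime := ⟨hps⟩
  have hinj : Function.Injective ((algebraMap (FractionRing R) Kb).comp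
      ((algebraMap R (FractionRing R)).comp (algebraMap F R))) := RingHom.injective _
  haveI : CharP Kb p := charP_of_injective_ringHom hinj p
  haveI : ExpChar Kb p := .prime hps
  -- the q^m-power Frobenius on Kb
  set ψ : ℕ → (Kb →+* Kb) := fun m => iterateFrobenius Kb p (s * m) with hψ
  have hψdef : ∀ m x, ψ m x = x ^ q ^ m := by
    intro m x
    rw [hψ, iterateFrobenius_def, hqps, ← pow_mul]
  -- inverse of A
  set Ai : Matrix (Fin n) (Fin n) R := ↑hA.unit⁻¹ with hAi
  have hAiA : Ai * A = 1 := by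
    have := hA.unit.inv_mul
    simpa [hAi] using this
  -- the sequence of matrices B
  set B : ℕ → Matrix (Fin n) (Fin n) R :=
    fun k => Nat.rec 1 (fun m Bm => (Ai.map (· ^ q ^ m)) * Bm) k with hB
  have hB0 : B 0 = 1 := rfl
  have hBsucc : ∀ m, B (m + 1) = (Ai.map (· ^ q ^ m)) * B m := fun m => rfl
  -- key: X^(q^m) = (B m) X for any solution
  have key : ∀ X : Fin n → Kb,
      (A.map alg).mulVec (fun i => X i ^ q) = X →
      ∀ m, (fun i => X i ^ q ^ m) = ((B m).map alg).mulVec X := by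
    intro X hX m
    have hXq : (fun i => X i ^ q) = (Ai.map alg).mulVec X := by
      calc (fun i => X i ^ q)
          = (1 : Matrix (Fin n) (Fin n) Kb).mulVec (fun i => X i ^ q) := by
            rw [Matrix.one_mulVec]
        _ = ((Ai.map alg) * (A.map alg)).mulVec (fun i => X i ^ q) := by
            rw [← Matrix.map_mul, hAiA, Matrix.map_one alg (map_zero alg) (map_one alg)]
        _ = (Ai.map alg).mulVec ((A.map alg).mulVec (fun i => X i ^ q)) := by
            rw [Matrix.mulVec_mulVec]
        _ = (Ai.map alg).mulVec X := by rw [hX]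
    induction m with
    | zero =>
      simp [hB0, Matrix.map_one alg (map_zero alg) (map_one alg), Matrix.one_mulVec]
    | succ m ih =>
      funext i
      have h1 : X i ^ q ^ (m + 1) = ψ m ((fun i => X i ^ q) i) := by
        rw [hψdef, pow_succ', pow_mul]
      rw [h1, hXq]
      have h2 : ψ m ((Ai.map alg).mulVec X i)
          = ((Ai.map alg).map (ψ m)).mulVec (fun j => ψ m (X j)) i := by
        simp [Matrix.mulVec, dotProduct, map_sum, map_mul]
      rw [h2]
      have h3 : (fun j => ψ m (X j)) = ((B m).map alg).mulVec X := by
        funext j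
        rw [hψdef]
        exact congrFun ih j
      rw [h3, Matrix.mulVec_mulVec]
      have h4 : (Ai.map alg).map (ψ m) * (B m).map alg = (B (m + 1)).map alg := by
        rw [hBsucc, Matrix.map_mul]
        congr 1
        ext a b
        simp [Matrix.map_apply, hψdef, map_pow]
      rw [h4]
  -- Noetherian stabilization
  haveI : IsNoetherian R (Matrix (Fin n) (Fin n) R) := inferInstance
  set N : ℕ →o Submodule R (Matrix (Fin n) (Fin n) R) :=
    ⟨fun k => Submodule.span R (Set.range fun j : Fin (k + 1) => B (j : ℕ)), by
      intro a b hab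
      apply Submodule.span_mono
      rintro _ ⟨j, rfl⟩
      exact ⟨Fin.castLE (by omega) j, rfl⟩⟩ with hN
  obtain ⟨m₀, hm₀⟩ := monotone_stabilizes_iff_noetherian.mpr ‹_› N
  have hmem : B (m₀ + 1) ∈ Submodule.span R
      (Set.range fun j : Fin (m₀ + 1) => B (j : ℕ)) := by
    have h1 : B (m₀ + 1) ∈ N (m₀ + 1) := Submodule.subset_span ⟨Fin.last (m₀ + 1), rfl⟩
    rwa [← hm₀ (m₀ + 1) (by omega)] at h1
  rw [Submodule.mem_span_range_iff_exists_fun] at hmem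
  obtain ⟨c, hc⟩ := hmem
  refine ⟨m₀ + 1, by omega, c, ?_⟩
  intro X hX i
  -- the polynomial identity
  have heq : X i ^ q ^ (m₀ + 1) = ∑ j : Fin (m₀ + 1), alg (c j) * X i ^ q ^ (j : ℕ) := by
    have h1 : X i ^ q ^ (m₀ + 1) = ((B (m₀ + 1)).map alg).mulVec X i := congrFun (key X hX (m₀ + 1)) i
    have h2 : ∀ j : Fin (m₀ + 1), X i ^ q ^ (j : ℕ) = ((B (j : ℕ)).map alg).mulVec X i :=
      fun j => congrFun (key X hX (j : ℕ)) i
    rw [h1, ← hc]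
    simp only [h2, Matrix.mulVec, dotProduct, Matrix.map_apply,
      Matrix.sum_apply, Matrix.smul_apply, smul_eq_mul, map_sum, map_mul,
      Finset.mul_sum]
    rw [Finset.sum_comm]
    refine Finset.sum_congr rfl fun y _ => ?_
    rw [Finset.sum_mul]
    exact Finset.sum_congr rfl fun j _ => by ring
  refine ⟨?_, heq⟩
  -- integrality
  have hq2 : 1 < q := by rw [hq]; exact Fintype.one_lt_card
  refine ⟨Polynomial.X ^ q ^ (m₀ + 1) - ∑ j : Fin (m₀ + 1), Polynomial.C (c j) * Polynomial.X ^ q ^ (j : ℕ),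
    ?_, ?_⟩
  · apply Polynomial.monic_X_pow_sub
    apply (Polynomial.degree_sum_le _ _).trans_lt
    rw [Finset.sup_lt_iff (by exact_mod_cast WithBot.bot_lt_coe (q ^ (m₀ + 1)))]
    intro j _
    apply (Polynomial.degree_C_mul_X_pow_le _ _).trans_lt
    have : q ^ (j : ℕ) < q ^ (m₀ + 1) := Nat.pow_lt_pow_right hq2 j.is_lt
    exact_mod_cast this
  · simp only [Polynomial.eval₂_sub, Polynomial.eval₂_X_pow, Polynomial.eval₂_finset_sum,
      Polynomial.eval₂_mul, Polynomial.eval₂_C, Polynomial.eval₂_X, Polynomial.eval₂_pow]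
    rw [sub_eq_zero]
    exact heq
end

section
/- Let K be a field containing F_q, A ∈ GL_n(K), and U ∈ GL_n(K_sep) with A = U (U^{(q)})^{-1}. Let E = K(U) be the field generated by the entries of U. Then for every σ ∈ Gal(E/K), the matrix ρ(σ) := U^{-1} σ(U) lies in GL_n(F_q), and ρ : Gal(E/K) → GL_n(F_q) is an injective group homomorphism. -/
lemma aux_mem_range_of_pow_card {F E : Type*} [Field F] [Fintype F] [Field E] [Algebra F E]
    (x : E) (h : x ^ Fintype.card F = x) : ∃ a : F, algebraMap F E a = x := by
  classical
  by_contra hc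
  push_neg at hc
  set q := Fintype.card F with hq
  set P : Polynomial E := Polynomial.X ^ q - Polynomial.X with hP
  have hP0 : P ≠ 0 := FiniteField.X_pow_card_sub_X_ne_zero E Fintype.one_lt_card
  have hroot : ∀ y : E, y ^ q = y → y ∈ P.roots := by
    intro y hy
    rw [Polynomial.mem_roots hP0]
    simp [P, Polynomial.IsRoot, hy]
  have hsub : insert x (Finset.univ.image (algebraMap F E)) ⊆ P.roots.toFinset := by
    intro y hy
    rw [Multiset.mem_toFinset]
    rcases Finset.mem_insert.mp hy with rfl | hy
    · exact hroot _ h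
    · obtain ⟨a, -, rfl⟩ := Finset.mem_image.mp hy
      exact hroot _ (by rw [← map_pow, FiniteField.pow_card])
  have hx : x ∉ Finset.univ.image (algebraMap F E) := by
    simp only [Finset.mem_image]
    rintro ⟨a, -, ha⟩
    exact hc a ha
  have h1 := Finset.card_le_card hsub
  rw [Finset.card_insert_of_notMem hx,
    Finset.card_image_of_injective _ (algebraMap F E).injective, Finset.card_univ] at h1
  have h2 : P.roots.toFinset.card ≤ q :=
    le_trans (Multiset.toFinset_card_le _) <|
      le_trans (Polynomial.card_roots' P)
        (le_of_eq (FiniteField.X_pow_card_sub_X_natDegree_eq E Fintype.one_lt_card))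
  omega

lemma aux_map_nonsing_inv {E E' : Type*} [Field E] [Field E'] {n : ℕ} (f : E →+* E')
    (M : Matrix (Fin n) (Fin n) E) (h : IsUnit M) : (M⁻¹).map ⇑f = (M.map ⇑f)⁻¹ := by
  symm
  apply Matrix.inv_eq_right_inv
  rw [← Matrix.map_mul, Matrix.mul_nonsing_inv _ ((Matrix.isUnit_iff_isUnit_det M).mp h),
    Matrix.map_one _ (map_zero f) (map_one f)]

lemma aux_isUnit_map {E E' : Type*} [Field E] [Field E'] {n : ℕ} (f : E →+* E')
    (M : Matrix (Fin n) (Fin n) E) (h : IsUnit M) : IsUnit (M.map ⇑f) := by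
  rw [Matrix.isUnit_iff_isUnit_det] at h ⊢
  rw [show M.map ⇑f = f.mapMatrix M from (RingHom.mapMatrix_apply f M).symm, ← RingHom.map_det]
  exact h.map f

/-- Let `K ⊇ F_q`, `A ∈ GL_n(K)`, and `U ∈ GL_n(E)` with `A = U (U^{(q)})⁻¹`, where `E = K(U)`
is generated over `K` by the entries of `U`. Then `σ ↦ U⁻¹ σ(U)` defines an injective group
homomorphism `ρ : Gal(E/K) → GL_n(F_q)`. -/
theorem stmt_12 (F : Type*) [Field F] [Fintype F] (q : ℕ) (hq : q = Fintype.card F)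
    (K E : Type*) [Field K] [Field E] [Algebra F K] [Algebra K E] [Algebra F E]
    [IsScalarTower F K E]
    (n : ℕ) (A : Matrix (Fin n) (Fin n) K) (hA : IsUnit A)
    (U : Matrix (Fin n) (Fin n) E) (hU : IsUnit U)
    (hAU : A.map (algebraMap K E) = U * (U.map (· ^ q))⁻¹)
    (hgen : IntermediateField.adjoin K {x : E | ∃ i j, U i j = x} = ⊤) :
    ∃ ρ : (E ≃ₐ[K] E) →* GL (Fin n) F,
      Function.Injective ρ ∧
        ∀ σ : E ≃ₐ[K] E,
          ((ρ σ : GL (Fin n) F) : Matrix (Fin n) (Fin n) F).map (algebraMap F E) =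
            U⁻¹ * U.map σ := by
  classical
  subst hq
  set q := Fintype.card F with hq
  set p := ringChar F with hpdef
  haveI : CharP F p := ringChar.charP F
  obtain ⟨k, hpp, hcard⟩ := FiniteField.card F p
  haveI : CharP E p := charP_of_injective_algebraMap (algebraMap F E).injective p
  haveI : ExpChar E p := ExpChar.prime hpp
  set φ : E →+* E := iterateFrobenius E p (k : ℕ) with hφdef
  have hφ : ∀ x : E, φ x = x ^ q := fun x => by
    rw [hφdef, iterateFrobenius_def, ← hcard]
  set e : F →+* E := algebraMap F E with hedef
  have hσe : ∀ (σ : E ≃ₐ[K] E) (a : F), σ (e a) = e a := by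
    intro σ a
    rw [hedef, IsScalarTower.algebraMap_apply F K E, σ.commutes]
  have hUdet : IsUnit U.det := (Matrix.isUnit_iff_isUnit_det U).mp hU
  have hmapU : U.map (· ^ q) = U.map ⇑φ := by
    ext i j; simp [Matrix.map_apply, hφ]
  rw [hmapU] at hAU
  have hUφ : IsUnit (U.map ⇑φ) := aux_isUnit_map φ U hU
  have hσr : ∀ σ : E ≃ₐ[K] E, ∃ f : E →+* E, ⇑f = ⇑σ :=
    fun σ => ⟨σ.toAlgHom.toRingHom, rfl⟩
  have hUσ : ∀ σ : E ≃ₐ[K] E, IsUnit (U.map ⇑σ) := by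
    intro σ
    obtain ⟨f, hf⟩ := hσr σ
    rw [← hf]
    exact aux_isUnit_map f U hU
  -- The matrix `U⁻¹ σ(U)` is fixed entrywise by the `q`-power Frobenius.
  have hMfix : ∀ σ : E ≃ₐ[K] E, (U⁻¹ * U.map ⇑σ).map ⇑φ = U⁻¹ * U.map ⇑σ := by
    intro σ
    obtain ⟨f, hf⟩ := hσr σ
    have hcomm : (U.map ⇑φ).map ⇑σ = (U.map ⇑σ).map ⇑φ := by
      ext i j; simp [Matrix.map_apply, hφ, map_pow]
    have hAσ : (A.map (algebraMap K E)).map ⇑σ = A.map (algebraMap K E) := by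
      ext i j
      simp only [Matrix.map_apply]
      exact σ.commutes _
    have hAU2 : U * (U.map ⇑φ)⁻¹ = U.map ⇑σ * ((U.map ⇑σ).map ⇑φ)⁻¹ := by
      calc U * (U.map ⇑φ)⁻¹ = (A.map (algebraMap K E)).map ⇑σ := by rw [hAσ, hAU]
        _ = (U * (U.map ⇑φ)⁻¹).map ⇑σ := by rw [hAU]
        _ = U.map ⇑σ * ((U.map ⇑φ)⁻¹).map ⇑σ := by rw [← hf, Matrix.map_mul]
        _ = U.map ⇑σ * ((U.map ⇑φ).map ⇑σ)⁻¹ := by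
              rw [← hf, aux_map_nonsing_inv f _ hUφ]
        _ = U.map ⇑σ * ((U.map ⇑σ).map ⇑φ)⁻¹ := by rw [hcomm]
    have hUσφ : IsUnit ((U.map ⇑σ).map ⇑φ) := aux_isUnit_map φ _ (hUσ σ)
    set u := hU.unit with hu
    set uφ := hUφ.unit with huφ
    set uσ := (hUσ σ).unit with huσ
    set uσφ := hUσφ.unit with huσφ
    have hunits : u * uφ⁻¹ = uσ * uσφ⁻¹ := by
      apply Units.ext
      push_cast
      exact hAU2
    have h3 : u⁻¹ * uσ = uφ⁻¹ * uσφ := by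
      calc u⁻¹ * uσ = u⁻¹ * ((uσ * uσφ⁻¹) * uσφ) := by group
        _ = u⁻¹ * ((u * uφ⁻¹) * uσφ) := by rw [← hunits]
        _ = uφ⁻¹ * uσφ := by group
    have h3coe := congrArg Units.val h3
    push_cast at h3coe
    calc (U⁻¹ * U.map ⇑σ).map ⇑φ
        = (U⁻¹).map ⇑φ * (U.map ⇑σ).map ⇑φ := Matrix.map_mul
      _ = (U.map ⇑φ)⁻¹ * (U.map ⇑σ).map ⇑φ := by rw [aux_map_nonsing_inv φ U hU]
      _ = U⁻¹ * U.map ⇑σ := h3coe.symm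
  -- Each entry of `U⁻¹ σ(U)` comes from `F`.
  have hent : ∀ (σ : E ≃ₐ[K] E) (i j : Fin n),
      ∃ a : F, e a = (U⁻¹ * U.map ⇑σ) i j := by
    intro σ i j
    have := congrFun (congrFun (hMfix σ) i) j
    simp only [Matrix.map_apply, hφ] at this
    obtain ⟨a, ha⟩ := aux_mem_range_of_pow_card ((U⁻¹ * U.map ⇑σ) i j) this
    exact ⟨a, ha⟩
  set N : (E ≃ₐ[K] E) → Matrix (Fin n) (Fin n) F :=
    fun σ => Matrix.of fun i j => (hent σ i j).choose with hNdef
  have hN : ∀ σ : E ≃ₐ[K] E, (N σ).map ⇑e = U⁻¹ * U.map ⇑σ := by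
    intro σ
    ext i j
    exact (hent σ i j).choose_spec
  have hinj : ∀ {P Q : Matrix (Fin n) (Fin n) F}, P.map ⇑e = Q.map ⇑e → P = Q := by
    intro P Q h
    ext i j
    exact e.injective (congrFun (congrFun h i) j)
  have hfixN : ∀ (σ τ : E ≃ₐ[K] E), (U⁻¹ * U.map ⇑τ).map ⇑σ = U⁻¹ * U.map ⇑τ := by
    intro σ τ
    rw [← hN τ]
    ext i j
    simp only [Matrix.map_apply]
    exact hσe σ _
  have hNmul : ∀ σ τ : E ≃ₐ[K] E, N (σ * τ) = N σ * N τ := by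
    intro σ τ
    apply hinj
    rw [Matrix.map_mul, hN, hN, hN]
    obtain ⟨f, hf⟩ := hσr σ
    have hmm : (U.map ⇑τ).map ⇑σ = U.map ⇑(σ * τ) := by
      ext i j
      simp [Matrix.map_apply]
    calc U⁻¹ * U.map ⇑(σ * τ)
        = U⁻¹ * (U.map ⇑σ * ((U.map ⇑σ)⁻¹ * U.map ⇑(σ * τ))) := by
          rw [Matrix.mul_nonsing_inv_cancel_left _ _
            ((Matrix.isUnit_iff_isUnit_det _).mp (hUσ σ))]
      _ = U⁻¹ * U.map ⇑σ * ((U.map ⇑σ)⁻¹ * U.map ⇑(σ * τ)) := by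
          rw [Matrix.mul_assoc]
      _ = U⁻¹ * U.map ⇑σ * ((U⁻¹ * U.map ⇑τ).map ⇑σ) := by
          have hstep : (U⁻¹ * U.map ⇑τ).map ⇑σ = (U.map ⇑σ)⁻¹ * U.map ⇑(σ * τ) := by
            rw [← hmm, ← hf, Matrix.map_mul, aux_map_nonsing_inv f U hU]
          rw [hstep]
      _ = (U⁻¹ * U.map ⇑σ) * (U⁻¹ * U.map ⇑τ) := by rw [hfixN σ τ]
  have hNone : N 1 = 1 := by
    apply hinj
    rw [hN]
    have : U.map ⇑(1 : E ≃ₐ[K] E) = U := by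
      ext i j; simp [Matrix.map_apply]
    rw [this, Matrix.nonsing_inv_mul _ hUdet,
      Matrix.map_one _ (map_zero e) (map_one e)]
  have hNunit : ∀ σ : E ≃ₐ[K] E, N σ * N σ⁻¹ = 1 := fun σ => by
    rw [← hNmul, mul_inv_cancel, hNone]
  have hNunit' : ∀ σ : E ≃ₐ[K] E, N σ⁻¹ * N σ = 1 := fun σ => by
    rw [← hNmul, inv_mul_cancel, hNone]
  refine ⟨{ toFun := fun σ => ⟨N σ, N σ⁻¹, hNunit σ, hNunit' σ⟩,
            map_one' := Units.ext hNone,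
            map_mul' := fun σ τ => Units.ext (hNmul σ τ) }, ?_, fun σ => hN σ⟩
  intro σ τ h
  have hNeq : N σ = N τ := congrArg Units.val h
  have hMeq : U⁻¹ * U.map ⇑σ = U⁻¹ * U.map ⇑τ := by
    rw [← hN, ← hN, hNeq]
  have hUeq : U.map ⇑σ = U.map ⇑τ := by
    have := congrArg (fun M => U * M) hMeq
    simpa only [Matrix.mul_nonsing_inv_cancel_left _ _ hUdet] using this
  have hentry : ∀ i j, σ (U i j) = τ (U i j) := fun i j =>
    congrFun (congrFun hUeq i) j
  apply AlgEquiv.ext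
  intro x
  have hx : x ∈ IntermediateField.adjoin K {x : E | ∃ i j, U i j = x} := by
    rw [hgen]; trivial
  refine IntermediateField.adjoin_induction K ?_ ?_ ?_ ?_ ?_ hx
  · rintro y ⟨i, j, rfl⟩
    exact hentry i j
  · intro a
    rw [σ.commutes, τ.commutes]
  · intro a b _ _ ha hb
    rw [map_add, map_add, ha, hb]
  · intro a _ ha
    rw [map_inv₀, map_inv₀, ha]
  · intro a b _ _ ha hb
    rw [map_mul, map_mul, ha, hb]
end
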